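/- For every integer n ≥ 0, the super ballot number (6/(n+3))·C_{n+1} satisfies (6/(n+3))·C_{n+1} = 2·∑_{0 ≤ k ≤ n/2} 2^{n-2k} · C(n, 2k) · C_k − ∑_{0 ≤ k ≤ (n-1)/2} 2^{n-2k} · C(n, 2k+1) · C_k · (2k+1)/(k+2), as an identity of rational numbers. -/

import Mathlib

/-!
Both sums are sums of hypergeometric terms `F n k = 2^(n-2k) C(n,2k) C_k` and
`a n k = 2^(n-2k) C(n,2k+1) C_k (2k+1)/(k+2)`, handled by creative telescoping.
Zeilberger's certificate `G n k = 4k(k+1)/(n+1) F (n+1) k` gives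
`2(2n+3) F n k - (n+3) F (n+1) k = G n (k+1) - G n k`, so the Touchard sums `T n = ∑ₖ F n k`
satisfy `(n+3) T (n+1) = 2(2n+3) T n`, the recurrence of `C_{n+1}`; this is Touchard's
identity `T n = C_{n+1}`. Similarly `(n+3) a n k - 2n F n k` telescopes with certificate
`4k F n k`, so `∑ₖ a n k = 2n/(n+3) C_{n+1}`, and
`2 C_{n+1} - 2n/(n+3) C_{n+1} = 6/(n+3) C_{n+1}`.
-/

open Finset

theorem add_two_mul_catalan_succ (n : ℕ) :
    (n + 2) * catalan (n + 1) = 2 * (2 * n + 1) * catalan n := by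
  refine Nat.eq_of_mul_eq_mul_left n.succ_pos ?_
  calc (n + 1) * ((n + 2) * catalan (n + 1))
      = (n + 1) * (n + 1).centralBinom := by rw [← succ_mul_catalan_eq_centralBinom]
    _ = 2 * (2 * n + 1) * n.centralBinom := Nat.succ_mul_centralBinom_succ n
    _ = (n + 1) * (2 * (2 * n + 1) * catalan n) := by
      rw [← succ_mul_catalan_eq_centralBinom]; ring

section CastChoose

variable {R : Type*} [CommRing R]

theorem cast_choose_succ_right_mul (n k : ℕ) :
    (n.choose (k + 1) : R) * (k + 1) = n.choose k * (n - k) := by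
  rcases le_or_gt k n with h | h
  · exact_mod_cast congrArg (Nat.cast (R := R)) (Nat.choose_succ_right_eq n k) |>.trans
      (by push_cast [Nat.cast_sub h]; ring)
  · simp [Nat.choose_eq_zero_of_lt h, Nat.choose_eq_zero_of_lt (Nat.lt_succ_of_lt h)]

theorem cast_choose_mul_succ (n k : ℕ) :
    (n.choose k : R) * (n + 1) = (n + 1).choose k * (n + 1 - k) := by
  rcases le_or_gt k (n + 1) with h | h
  · exact_mod_cast congrArg (Nat.cast (R := R)) (Nat.choose_mul_succ_eq n k) |>.trans
      (by push_cast [Nat.cast_sub h]; ring)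
  · simp [Nat.choose_eq_zero_of_lt h, Nat.choose_eq_zero_of_lt (Nat.lt_of_succ_lt h)]

end CastChoose

-- `2 ^ n / 4 ^ k` stands for `2 ^ (n - 2 * k)`, avoiding truncated subtraction.
def touchardTerm (n k : ℕ) : ℚ := 2 ^ n / 4 ^ k * n.choose (2 * k) * catalan k

def amdeberhanTerm (n k : ℕ) : ℚ :=
  2 ^ n / 4 ^ k * n.choose (2 * k + 1) * catalan k * (2 * k + 1) / (k + 2)

theorem touchardTerm_eq_zero {n k : ℕ} (h : n < 2 * k) : touchardTerm n k = 0 := by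
  simp [touchardTerm, Nat.choose_eq_zero_of_lt h]

theorem amdeberhanTerm_eq_zero {n k : ℕ} (h : n < 2 * k + 1) : amdeberhanTerm n k = 0 := by
  simp [amdeberhanTerm, Nat.choose_eq_zero_of_lt h]

theorem touchardTerm_succ_left (n k : ℕ) :
    (n + 1 - 2 * k : ℚ) * touchardTerm (n + 1) k = 2 * (n + 1) * touchardTerm n k := by
  have h := cast_choose_mul_succ (R := ℚ) n (2 * k)
  push_cast at h
  simp only [touchardTerm, pow_succ]
  linear_combination (-2 * 2 ^ n / 4 ^ k * catalan k : ℚ) * h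

theorem touchardTerm_succ_right (n k : ℕ) :
    4 * (k + 1) * (k + 2) * touchardTerm n (k + 1) =
      (n - 2 * k) * (n - 2 * k - 1) * touchardTerm n k := by
  have h₁ := cast_choose_succ_right_mul (R := ℚ) n (2 * k)
  have h₂ := cast_choose_succ_right_mul (R := ℚ) n (2 * k + 1)
  have hC : ((k + 2) * catalan (k + 1) : ℚ) = 2 * (2 * k + 1) * catalan k := by
    exact_mod_cast add_two_mul_catalan_succ k
  push_cast at h₁ h₂
  simp only [touchardTerm, Nat.mul_succ, pow_succ]
  field_simp
  linear_combination ((k + 1) * n.choose (2 * k + 2) : ℚ) * hC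
    + ((2 * k + 1) * catalan k : ℚ) * h₂ + ((n - 2 * k - 1) * catalan k : ℚ) * h₁

theorem add_two_mul_amdeberhanTerm (n k : ℕ) :
    (k + 2) * amdeberhanTerm n k = (n - 2 * k) * touchardTerm n k := by
  have h := cast_choose_succ_right_mul (R := ℚ) n (2 * k)
  push_cast at h
  simp only [amdeberhanTerm, touchardTerm]
  field_simp
  linear_combination (catalan k : ℚ) * h

def touchardCert (n k : ℕ) : ℚ := 4 * k * (k + 1) / (n + 1) * touchardTerm (n + 1) k

theorem touchardTerm_telescope (n k : ℕ) :
    2 * (2 * n + 3) * touchardTerm n k - (n + 3) * touchardTerm (n + 1) k =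
      touchardCert n (k + 1) - touchardCert n k := by
  have h₁ := touchardTerm_succ_left n k
  have h₂ := touchardTerm_succ_right (n + 1) k
  simp only [touchardCert]
  push_cast at h₂ ⊢
  field_simp
  linear_combination (-(2 * n + 3) : ℚ) * h₁ - h₂

theorem sum_touchardTerm (n : ℕ) :
    ∑ k ∈ range (n + 2), touchardTerm n k = catalan (n + 1) := by
  induction n with
  | zero => norm_num [sum_range_succ, touchardTerm, catalan_one]
  | succ n ih =>
    have htel : ∑ k ∈ range (n + 3),
        (2 * (2 * n + 3) * touchardTerm n k - (n + 3) * touchardTerm (n + 1) k) = 0 := by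
      rw [sum_congr rfl fun k _ ↦ touchardTerm_telescope n k, sum_range_sub]
      simp [touchardCert, touchardTerm_eq_zero (show n + 1 < 2 * (n + 3) by omega)]
    have hprev : ∑ k ∈ range (n + 3), touchardTerm n k = catalan (n + 1) := by
      rw [sum_range_succ, ih, touchardTerm_eq_zero (by omega), add_zero]
    have hC : ((n + 3) * catalan (n + 1 + 1) : ℚ) = 2 * (2 * n + 3) * catalan (n + 1) := by
      exact_mod_cast add_two_mul_catalan_succ (n + 1)
    rw [sum_sub_distrib, ← mul_sum, ← mul_sum, hprev] at htel
    refine mul_left_cancel₀ (show (n + 3 : ℚ) ≠ 0 by positivity) ?_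
    linear_combination -hC - htel

def amdeberhanCert (n k : ℕ) : ℚ := 4 * k * touchardTerm n k

theorem amdeberhanTerm_telescope (n k : ℕ) :
    (n + 3) * amdeberhanTerm n k - 2 * n * touchardTerm n k =
      amdeberhanCert n (k + 1) - amdeberhanCert n k := by
  refine mul_left_cancel₀ (show (k + 2 : ℚ) ≠ 0 by positivity) ?_
  simp only [amdeberhanCert]
  push_cast
  linear_combination (n + 3 : ℚ) * add_two_mul_amdeberhanTerm n k - touchardTerm_succ_right n k

theorem sum_amdeberhanTerm (n : ℕ) :
    ∑ k ∈ range (n + 2), amdeberhanTerm n k = 2 * n / (n + 3) * catalan (n + 1) := by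
  have htel : ∑ k ∈ range (n + 2),
      ((n + 3) * amdeberhanTerm n k - 2 * n * touchardTerm n k) = 0 := by
    rw [sum_congr rfl fun k _ ↦ amdeberhanTerm_telescope n k, sum_range_sub]
    simp [amdeberhanCert, touchardTerm_eq_zero (show n < 2 * (n + 2) by omega)]
  rw [sum_sub_distrib, ← mul_sum, ← mul_sum, sum_touchardTerm, sub_eq_zero] at htel
  rw [div_mul_eq_mul_div, eq_div_iff (by positivity)]
  linear_combination htel

theorem two_pow_sub_two_mul {K : Type*} [DivisionRing K] [NeZero (2 : K)] {n k : ℕ}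
    (h : 2 * k ≤ n) : (2 : K) ^ (n - 2 * k) = 2 ^ n / 4 ^ k := by
  rw [pow_sub₀ _ two_ne_zero h, pow_mul]
  norm_num [div_eq_mul_inv]

theorem sum_Icc_eq_sum_touchardTerm (n : ℕ) :
    ∑ k ∈ Icc 0 (n / 2), (2 : ℚ) ^ (n - 2 * k) * n.choose (2 * k) * catalan k =
      ∑ k ∈ range (n + 2), touchardTerm n k := by
  rw [← Nat.range_succ_eq_Icc_zero, eventually_constant_sum
    (fun k hk ↦ touchardTerm_eq_zero (by omega)) (by omega : n / 2 + 1 ≤ n + 2)]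
  refine sum_congr rfl fun k hk ↦ ?_
  rw [touchardTerm, two_pow_sub_two_mul (by simp at hk; omega)]

theorem sum_range_eq_sum_amdeberhanTerm (n : ℕ) :
    ∑ k ∈ range ((n + 1) / 2), (2 : ℚ) ^ (n - 2 * k) * n.choose (2 * k + 1) * catalan k *
        (2 * k + 1) / (k + 2) = ∑ k ∈ range (n + 2), amdeberhanTerm n k := by
  rw [eventually_constant_sum (fun k hk ↦ amdeberhanTerm_eq_zero (by omega))
    (by omega : (n + 1) / 2 ≤ n + 2)]
  refine sum_congr rfl fun k hk ↦ ?_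
  rw [amdeberhanTerm, two_pow_sub_two_mul (by simp at hk; omega)]

/-- The super ballot number `(6/(n+3)) * C (n+1)` equals twice the Touchard sum minus the
Amdeberhan sum, as an identity of rational numbers. -/
theorem super_ballot_identity (n : ℕ) :
    (6 / (n + 3) : ℚ) * (catalan (n + 1) : ℚ) =
      2 * ∑ k ∈ Finset.Icc 0 (n / 2),
            2 ^ (n - 2 * k) * (n.choose (2 * k) : ℚ) * (catalan k : ℚ)
      - ∑ k ∈ Finset.range ((n + 1) / 2),
            2 ^ (n - 2 * k) * (n.choose (2 * k + 1) : ℚ) * (catalan k : ℚ) *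
              (2 * k + 1) / (k + 2) := by
  rw [sum_Icc_eq_sum_touchardTerm, sum_range_eq_sum_amdeberhanTerm, sum_touchardTerm,
    sum_amdeberhanTerm]
  field_simp
  ring
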